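/- Let K ≥ 1, let A₁ and A₂ be invertible K×K real matrices with A₂ uniformly exponentially stable, let β be a 1×K row vector, and let τ ≥ 0. Then the two-regime second-moment identity holds: ∫_0^τ (t²/2)·(−β·exp(t•A₁)·A₁·𝟙) dt + ∫_τ^∞ (t²/2)·(−β·exp(τ•A₁)·exp((t−τ)•A₂)·A₂·𝟙) dt = τ·β·exp(τ•A₁)·(A₁⁻¹ − A₂⁻¹)·𝟙 − β·exp(τ•A₁)·(A₁⁻² − A₂⁻²)·𝟙 + β·A₁⁻²·𝟙. (This gives the expected accumulated age of incorrect information in a cycle under the estimation-aware transmission policy with threshold τ.) -/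

import Mathlib

open MeasureTheory Matrix

/-- The all-ones column vector. -/
noncomputable def onesCol (K : ℕ) : Matrix (Fin K) (Fin 1) ℝ := Matrix.of fun _ _ => 1

/-- A square matrix `A` is uniformly exponentially stable if `‖exp(t•A)‖ ≤ C·exp(-α·t)`
for all `t ≥ 0` (here in the entrywise sup norm). -/
def UnifExpStable {K : ℕ} (A : Matrix (Fin K) (Fin K) ℝ) : Prop :=
  ∃ C > (0:ℝ), ∃ α > (0:ℝ), ∀ t ≥ (0:ℝ), ∀ i j,
    |NormedSpace.exp (t • A) i j| ≤ C * Real.exp (-α * t)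

/-!
Both integrands are `(t²/2) φ(exp((t - s) • A) * A)` for a linear functional `φ` on matrices, and
`G(t) = exp((t - s) • A) * ((t²/2) • 1 - t • A⁻¹ + A⁻²)` is a primitive of
`(t²/2) • exp((t - s) • A) * A`. The fundamental theorem of calculus then evaluates the integral
over `[0, τ]`, and also the one over `[τ, ∞)`: there, uniform exponential stability of `A₂` makes
every entry of `exp((t - τ) • A₂)` decay exponentially, which beats the polynomial factors, so
`φ(G(t)) → 0` and the integrand is integrable.
-/

open Filter Asymptotics Set NormedSpace
open scoped Topology

theorem Asymptotics.IsBigO.pow_mul_of_exp_neg {f : ℝ → ℝ} {α : ℝ} (hα : 0 < α)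
    (hf : f =O[atTop] fun t => Real.exp (-α * t)) (k : ℕ) :
    (fun t => t ^ k * f t) =O[atTop] fun t => Real.exp (-(α / 2) * t) := by
  refine ((isLittleO_pow_exp_pos_mul_atTop k (half_pos hα)).isBigO.mul hf).congr_right
    fun t => ?_
  rw [← Real.exp_add]
  ring_nf

namespace Matrix

variable {m n : Type*} [Fintype m] [Fintype n]

def sandwich (v : Matrix (Fin 1) n ℝ) (w : Matrix n (Fin 1) ℝ) :
    Matrix n n ℝ →ₗ[ℝ] ℝ where
  toFun M := (v * M * w) 0 0
  map_add' M N := by simp only [Matrix.mul_add, Matrix.add_mul, add_apply]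
  map_smul' c M := by simp only [Matrix.mul_smul, Matrix.smul_mul, smul_apply, RingHom.id_apply]

@[simp]
theorem sandwich_apply (v : Matrix (Fin 1) n ℝ) (w : Matrix n (Fin 1) ℝ) (M : Matrix n n ℝ) :
    sandwich v w M = (v * M * w) 0 0 := rfl

theorem isBigO_map_of_forall_isBigO_apply [DecidableEq m] [DecidableEq n] {ι : Type*}
    {l : Filter ι} {g : ι → ℝ} {f : ι → Matrix m n ℝ}
    (hf : ∀ i j, (fun x => f x i j) =O[l] g) (φ : Matrix m n ℝ →ₗ[ℝ] ℝ) :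
    (fun x => φ (f x)) =O[l] g := by
  have hφ : (fun x => φ (f x)) = fun x => ∑ i, ∑ j, φ (single i j 1) * f x i j := by
    funext x
    conv_lhs => rw [matrix_eq_sum_single (f x)]
    simp only [map_sum]
    refine Finset.sum_congr rfl fun i _ => Finset.sum_congr rfl fun j _ => ?_
    have h : single i j (f x i j) = f x i j • single i j 1 := by
      rw [smul_single, smul_eq_mul, mul_one]
    rw [h, map_smul, smul_eq_mul, mul_comm]
  rw [hφ]
  exact IsBigO.fun_sum fun i _ => IsBigO.fun_sum fun j _ => (hf i j).const_mul_left _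

variable [DecidableEq n]

/-- The polynomial factor `P(t)` is chosen so that `A * P(t) + P'(t) = (t²/2) • A`. -/
noncomputable def secondMomentPrimitive (A : Matrix n n ℝ) (s t : ℝ) : Matrix n n ℝ :=
  exp ((t - s) • A) * ((t ^ 2 / 2) • 1 - t • A⁻¹ + A⁻¹ * A⁻¹)

theorem map_secondMomentPrimitive (A : Matrix n n ℝ) (φ : Matrix n n ℝ →ₗ[ℝ] ℝ) (s t : ℝ) :
    φ (secondMomentPrimitive A s t) = t ^ 2 / 2 * φ (exp ((t - s) • A))
      - t * φ (exp ((t - s) • A) * A⁻¹) + φ (exp ((t - s) • A) * (A⁻¹ * A⁻¹)) := by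
  simp only [secondMomentPrimitive, Matrix.mul_add, Matrix.mul_sub, Matrix.mul_smul,
    Matrix.mul_one, map_add, map_sub, map_smul, smul_eq_mul]

theorem hasDerivAt_exp_sub_smul (A : Matrix n n ℝ) (s t : ℝ) :
    HasDerivAt (fun u : ℝ => exp ((u - s) • A)) (exp ((t - s) • A) * A) t := by
  -- Matrices carry no global norm; any normed-algebra structure inducing their topology will do.
  let := Matrix.linftyOpNormedRing (n := n) (α := ℝ)
  let := Matrix.linftyOpNormedAlgebra (n := n) (R := ℝ) (α := ℝ)
  have h := (hasDerivAt_exp_smul_const A (t - s)).scomp t ((hasDerivAt_id t).sub_const s)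
  rw [one_smul] at h
  exact h

theorem hasDerivAt_secondMomentPrimitive (A : Matrix n n ℝ) [Invertible A] (s t : ℝ) :
    HasDerivAt (secondMomentPrimitive A s) ((t ^ 2 / 2) • (exp ((t - s) • A) * A)) t := by
  let := Matrix.linftyOpNormedRing (n := n) (α := ℝ)
  let := Matrix.linftyOpNormedAlgebra (n := n) (R := ℝ) (α := ℝ)
  have hP : HasDerivAt (fun u : ℝ => (u ^ 2 / 2) • (1 : Matrix n n ℝ) - u • A⁻¹ + A⁻¹ * A⁻¹)
      (t • 1 - (1 : ℝ) • A⁻¹) t := by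
    refine ((((hasDerivAt_pow 2 t).div_const 2).smul_const 1).sub
      ((hasDerivAt_id t).smul_const A⁻¹)).add_const _ |>.congr_deriv ?_
    simp
  refine ((hasDerivAt_exp_sub_smul A s t).fun_mul hP).congr_deriv ?_
  have hA : A * A⁻¹ = 1 := mul_inv_of_invertible A
  simp only [one_smul, Matrix.mul_add, Matrix.mul_sub, Matrix.mul_smul, Matrix.mul_one,
    Matrix.mul_assoc, hA, ← Matrix.mul_assoc A A⁻¹, Matrix.one_mul]
  abel

theorem hasDerivAt_map_exp_sub_smul (A : Matrix n n ℝ) (φ : Matrix n n ℝ →ₗ[ℝ] ℝ) (s t : ℝ) :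
    HasDerivAt (fun u => φ (exp ((u - s) • A))) (φ (exp ((t - s) • A) * A)) t := by
  let := Matrix.linftyOpNormedRing (n := n) (α := ℝ)
  let := Matrix.linftyOpNormedAlgebra (n := n) (R := ℝ) (α := ℝ)
  have hE : HasDerivAt (fun u : ℝ => exp ((u - s) • A)) (exp ((t - s) • A) * A) t :=
    hasDerivAt_exp_sub_smul A s t
  exact φ.toContinuousLinearMap.hasFDerivAt.comp_hasDerivAt t hE

theorem hasDerivAt_map_secondMomentPrimitive (A : Matrix n n ℝ) [Invertible A]
    (φ : Matrix n n ℝ →ₗ[ℝ] ℝ) (s t : ℝ) :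
    HasDerivAt (fun u => φ (secondMomentPrimitive A s u))
      (t ^ 2 / 2 * φ (exp ((t - s) • A) * A)) t := by
  let := Matrix.linftyOpNormedRing (n := n) (α := ℝ)
  let := Matrix.linftyOpNormedAlgebra (n := n) (R := ℝ) (α := ℝ)
  have hG : HasDerivAt (secondMomentPrimitive A s) ((t ^ 2 / 2) • (exp ((t - s) • A) * A)) t :=
    hasDerivAt_secondMomentPrimitive A s t
  exact (φ.toContinuousLinearMap.hasFDerivAt.comp_hasDerivAt t hG).congr_deriv (φ.map_smul _ _)

theorem continuous_sq_mul_map_exp_sub_smul (A : Matrix n n ℝ) (φ : Matrix n n ℝ →ₗ[ℝ] ℝ)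
    (s : ℝ) : Continuous fun t => t ^ 2 / 2 * φ (exp ((t - s) • A) * A) :=
  (continuous_pow 2).div_const 2 |>.mul <| continuous_iff_continuousAt.2 fun t =>
    (hasDerivAt_map_exp_sub_smul A (φ ∘ₗ LinearMap.mulRight ℝ A) s t).continuousAt

theorem integral_sq_mul_map_exp_sub_smul (A : Matrix n n ℝ) [Invertible A]
    (φ : Matrix n n ℝ →ₗ[ℝ] ℝ) (s a b : ℝ) :
    ∫ t in a..b, t ^ 2 / 2 * φ (exp ((t - s) • A) * A)
      = φ (secondMomentPrimitive A s b) - φ (secondMomentPrimitive A s a) :=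
  intervalIntegral.integral_eq_sub_of_hasDerivAt
    (fun t _ => hasDerivAt_map_secondMomentPrimitive A φ s t)
    ((continuous_sq_mul_map_exp_sub_smul A φ s).intervalIntegrable a b)

end Matrix

namespace UnifExpStable

variable {K : ℕ} {A : Matrix (Fin K) (Fin K) ℝ}

theorem exists_isBigO_exp_sub_smul_apply (hA : UnifExpStable A) :
    ∃ α > 0, ∀ (s : ℝ) (i j : Fin K),
      (fun t => exp ((t - s) • A) i j) =O[atTop] fun t => Real.exp (-α * t) := by
  obtain ⟨C, -, α, hα, hbound⟩ := hA
  refine ⟨α, hα, fun s i j => IsBigO.of_bound (C * Real.exp (α * s)) ?_⟩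
  filter_upwards [eventually_ge_atTop s] with t hst
  rw [Real.norm_eq_abs, Real.norm_of_nonneg (Real.exp_pos _).le]
  calc |exp ((t - s) • A) i j| ≤ C * Real.exp (-α * (t - s)) := hbound _ (sub_nonneg.2 hst) i j
    _ = C * Real.exp (α * s) * Real.exp (-α * t) := by
      rw [mul_assoc, ← Real.exp_add]
      ring_nf

theorem integral_Ioi_sq_mul_map_exp_sub_smul (hA : UnifExpStable A) [Invertible A]
    (φ : Matrix (Fin K) (Fin K) ℝ →ₗ[ℝ] ℝ) (s a : ℝ) :
    ∫ t in Ioi a, t ^ 2 / 2 * φ (exp ((t - s) • A) * A) = -φ (secondMomentPrimitive A s a) := by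
  obtain ⟨α, hα, hentry⟩ := hA.exists_isBigO_exp_sub_smul_apply
  have hdecay : ∀ (B : Matrix (Fin K) (Fin K) ℝ) (k : ℕ),
      (fun t => t ^ k * φ (exp ((t - s) • A) * B)) =O[atTop]
        fun t => Real.exp (-(α / 2) * t) := fun B k =>
    (isBigO_map_of_forall_isBigO_apply (hentry s) (φ ∘ₗ LinearMap.mulRight ℝ B))
      |>.pow_mul_of_exp_neg hα k
  have hlim : Tendsto (fun t => φ (secondMomentPrimitive A s t)) atTop (𝓝 0) := by
    have h := (((hdecay 1 2).const_mul_left (1 / 2)).sub (hdecay A⁻¹ 1)).add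
      (hdecay (A⁻¹ * A⁻¹) 0)
    refine IsBigO.trans_tendsto (h.congr_left fun t => ?_) ?_
    · simp only [map_secondMomentPrimitive, Matrix.mul_one, pow_one, pow_zero, one_mul]
      ring
    · exact Real.tendsto_exp_atBot.comp (tendsto_id.const_mul_atTop_of_neg (by linarith))
  have hint : IntegrableOn (fun t => t ^ 2 / 2 * φ (exp ((t - s) • A) * A)) (Ioi a) := by
    refine integrable_of_isBigO_exp_neg (half_pos hα)
      (continuous_sq_mul_map_exp_sub_smul A φ s).continuousOn
      (((hdecay A 2).const_mul_left (1 / 2)).congr_left fun t => ?_)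
    ring
  rw [integral_Ioi_of_hasDerivAt_of_tendsto
    (hasDerivAt_map_secondMomentPrimitive A φ s a).continuousAt.continuousWithinAt
    (fun t _ => hasDerivAt_map_secondMomentPrimitive A φ s t) hint hlim, zero_sub]

end UnifExpStable

theorem eat_two_regime_second_moment_general (K : ℕ)
    (A₁ A₂ : Matrix (Fin K) (Fin K) ℝ) (hA₁ : Invertible A₁) (hA₂ : Invertible A₂)
    (hstab : UnifExpStable A₂) (β : Matrix (Fin 1) (Fin K) ℝ) (τ : ℝ) :
    (∫ t in (0:ℝ)..τ,
        (t ^ 2 / 2) * (-(β * NormedSpace.exp (t • A₁) * A₁ * onesCol K)) 0 0)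
      + ∫ t in Set.Ici τ,
          (t ^ 2 / 2) * (-(β * NormedSpace.exp (τ • A₁)
              * NormedSpace.exp ((t - τ) • A₂) * A₂ * onesCol K)) 0 0
      = τ * (β * NormedSpace.exp (τ • A₁) * (A₁⁻¹ - A₂⁻¹) * onesCol K) 0 0
        - (β * NormedSpace.exp (τ • A₁) * (A₁⁻¹ * A₁⁻¹ - A₂⁻¹ * A₂⁻¹) * onesCol K) 0 0
        + (β * (A₁⁻¹ * A₁⁻¹) * onesCol K) 0 0 := by
  have h₁ := integral_sq_mul_map_exp_sub_smul A₁ (sandwich β (onesCol K)) 0 0 τ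
  have h₂ := hstab.integral_Ioi_sq_mul_map_exp_sub_smul
    (sandwich (β * exp (τ • A₁)) (onesCol K)) τ τ
  simp only [sandwich_apply, map_secondMomentPrimitive, sub_zero, sub_self, zero_smul, exp_zero,
    Matrix.one_mul, Matrix.mul_assoc] at h₁ h₂
  rw [integral_Ici_eq_integral_Ioi]
  simp only [Matrix.neg_apply, mul_neg, intervalIntegral.integral_neg, integral_neg,
    Matrix.mul_assoc]
  rw [h₁, h₂]
  simp only [Matrix.mul_sub, Matrix.sub_mul, Matrix.sub_apply, Matrix.mul_assoc]
  ring

/-- Two-regime second-moment identity: the expected accumulated AoII of a cycle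
under the EAT policy with threshold `τ`. -/
theorem eat_two_regime_second_moment (K : ℕ) (hK : 1 ≤ K)
    (A₁ A₂ : Matrix (Fin K) (Fin K) ℝ) (hA₁ : Invertible A₁) (hA₂ : Invertible A₂)
    (hstab : UnifExpStable A₂) (β : Matrix (Fin 1) (Fin K) ℝ) (τ : ℝ) (hτ : 0 ≤ τ) :
    (∫ t in (0:ℝ)..τ,
        (t ^ 2 / 2) * (-(β * NormedSpace.exp (t • A₁) * A₁ * onesCol K)) 0 0)
      + ∫ t in Set.Ici τ,
          (t ^ 2 / 2) * (-(β * NormedSpace.exp (τ • A₁)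
              * NormedSpace.exp ((t - τ) • A₂) * A₂ * onesCol K)) 0 0
      = τ * (β * NormedSpace.exp (τ • A₁) * (A₁⁻¹ - A₂⁻¹) * onesCol K) 0 0
        - (β * NormedSpace.exp (τ • A₁) * (A₁⁻¹ * A₁⁻¹ - A₂⁻¹ * A₂⁻¹) * onesCol K) 0 0
        + (β * (A₁⁻¹ * A₁⁻¹) * onesCol K) 0 0 :=
  eat_two_regime_second_moment_general K A₁ A₂ hA₁ hA₂ hstab β τ
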